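/- Let F be an integral binary quartic form with F(x,y) ≡ L₁(x,y)·L₂(x,y)³ (mod 16), where L₁, L₂ are linear forms over ℤ whose reductions modulo 2 are linearly independent. Then for any odd integer h, the equation F(x,y) = h has a solution in ℤ₂ (the 2-adic integers). -/

import Mathlib

/-!
Choose `(x₀, y₀) ∈ ℤ₂²` with `L₁(x₀, y₀) = h` and `L₂(x₀, y₀) = 1`, possible because the
determinant is a `2`-adic unit. Then `F(x₀, y₀) ≡ h (mod 16)`, so `F(x₀, y₀) = h s⁴` for a unit
`s`, since every `1 + 16k` is a fourth power in `ℤ₂`; homogeneity gives `F(x₀/s, y₀/s) = h`.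
-/

theorem dvd_quartic_sub_mul_cube {R : Type*} [CommRing R] {m a0 a1 a2 a3 a4 α β γ δ : R}
    (h0 : m ∣ a0 - α * γ ^ 3) (h1 : m ∣ a1 - (3 * α * γ ^ 2 * δ + β * γ ^ 3))
    (h2 : m ∣ a2 - (3 * α * γ * δ ^ 2 + 3 * β * γ ^ 2 * δ))
    (h3 : m ∣ a3 - (α * δ ^ 3 + 3 * β * γ * δ ^ 2)) (h4 : m ∣ a4 - β * δ ^ 3) (x y : R) :
    m ∣ a0 * x ^ 4 + a1 * x ^ 3 * y + a2 * x ^ 2 * y ^ 2 + a3 * x * y ^ 3 + a4 * y ^ 4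
      - (α * x + β * y) * (γ * x + δ * y) ^ 3 := by
  have expand : a0 * x ^ 4 + a1 * x ^ 3 * y + a2 * x ^ 2 * y ^ 2 + a3 * x * y ^ 3 + a4 * y ^ 4
      - (α * x + β * y) * (γ * x + δ * y) ^ 3
      = (a0 - α * γ ^ 3) * x ^ 4 + (a1 - (3 * α * γ ^ 2 * δ + β * γ ^ 3)) * (x ^ 3 * y)
        + (a2 - (3 * α * γ * δ ^ 2 + 3 * β * γ ^ 2 * δ)) * (x ^ 2 * y ^ 2)
        + (a3 - (α * δ ^ 3 + 3 * β * γ * δ ^ 2)) * (x * y ^ 3) + (a4 - β * δ ^ 3) * y ^ 4 := by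
    ring
  rw [expand]
  exact ((((h0.mul_right _).add (h1.mul_right _)).add (h2.mul_right _)).add
    (h3.mul_right _)).add (h4.mul_right _)

namespace PadicInt

theorem two_mem_nonunits : (2 : ℤ_[2]) ∈ nonunits ℤ_[2] := by
  have h := norm_p (p := 2)
  norm_num at h
  rw [PadicInt.mem_nonunits, h]
  norm_num

theorem isUnit_one_add_two_mul (z : ℤ_[2]) : IsUnit (1 + 2 * z) := by
  simpa [sub_eq_add_neg] using IsLocalRing.isUnit_one_sub_self_of_mem_nonunits _
    (mul_mem_nonunits_left (b := -z) two_mem_nonunits)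

theorem isUnit_intCast_of_odd {n : ℤ} (hn : Odd n) : IsUnit (n : ℤ_[2]) := by
  by_contra h
  rw [not_isUnit_iff, norm_intCast_lt_one_iff] at h
  exact Int.not_even_iff_odd.2 hn (even_iff_two_dvd.2 (by exact_mod_cast h))

open Polynomial in
/-- Hensel's lemma applies to `((1 + 2X)⁴ - 1 - 16k) / 8`, whose derivative at `0` is `1`. -/
theorem exists_one_add_two_mul_pow_four_eq (k : ℤ_[2]) :
    ∃ z : ℤ_[2], (1 + 2 * z) ^ 4 = 1 + 16 * k := by
  set g : ℤ_[2][X] := X + 3 * X ^ 2 + 4 * X ^ 3 + 2 * X ^ 4 - C (2 * k)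
  have hg : ‖g.aeval (0 : ℤ_[2])‖ < ‖g.derivative.aeval (0 : ℤ_[2])‖ ^ 2 := by
    simpa [g] using mem_nonunits.1 (mul_mem_nonunits_left (b := k) two_mem_nonunits)
  obtain ⟨z, hz, -⟩ := hensels_lemma hg
  refine ⟨z, ?_⟩
  simp [g] at hz
  linear_combination 8 * hz

end PadicInt

/-- If `F ≡ L₁ L₂³ (mod 16)` with `L₁, L₂` independent mod `2`, then for any odd
`h`, the equation `F(x,y) = h` has a solution in `ℤ₂`. -/
theorem quartic_represents_h_2adically (a0 a1 a2 a3 a4 α β γ δ h : ℤ)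
    (hdet : Odd (α*δ - β*γ)) (hh : Odd h)
    (h0 : (16:ℤ) ∣ (a0 - α*γ^3))
    (h1 : (16:ℤ) ∣ (a1 - (3*α*γ^2*δ + β*γ^3)))
    (h2 : (16:ℤ) ∣ (a2 - (3*α*γ*δ^2 + 3*β*γ^2*δ)))
    (h3 : (16:ℤ) ∣ (a3 - (α*δ^3 + 3*β*γ*δ^2)))
    (h4 : (16:ℤ) ∣ (a4 - β*δ^3)) :
    ∃ x y : ℤ_[2],
      (a0:ℤ_[2])*x^4 + (a1:ℤ_[2])*x^3*y + (a2:ℤ_[2])*x^2*y^2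
        + (a3:ℤ_[2])*x*y^3 + (a4:ℤ_[2])*y^4 = (h:ℤ_[2]) := by
  obtain ⟨d, hd⟩ := PadicInt.isUnit_intCast_of_odd hdet
  obtain ⟨u, hu⟩ := PadicInt.isUnit_intCast_of_odd hh
  push_cast at hd
  set x₀ : ℤ_[2] := ↑d⁻¹ * (δ * h - β)
  set y₀ : ℤ_[2] := ↑d⁻¹ * (α - γ * h)
  have hL₁ : (α : ℤ_[2]) * x₀ + β * y₀ = h := by
    linear_combination (h : ℤ_[2]) * d.inv_mul - ↑d⁻¹ * (h : ℤ_[2]) * hd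
  have hL₂ : (γ : ℤ_[2]) * x₀ + δ * y₀ = 1 := by
    linear_combination d.inv_mul - ↑d⁻¹ * hd
  have hF : (16 : ℤ_[2]) ∣ (a0:ℤ_[2])*x₀^4 + (a1:ℤ_[2])*x₀^3*y₀ + (a2:ℤ_[2])*x₀^2*y₀^2
      + (a3:ℤ_[2])*x₀*y₀^3 + (a4:ℤ_[2])*y₀^4 - (α * x₀ + β * y₀) * (γ * x₀ + δ * y₀) ^ 3 := by
    refine dvd_quartic_sub_mul_cube ?_ ?_ ?_ ?_ ?_ x₀ y₀ <;> norm_cast <;>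
      exact Int.cast_dvd_cast _ _ ‹_›
  rw [hL₁, hL₂] at hF
  obtain ⟨k, hk⟩ := hF
  obtain ⟨z, hz⟩ := PadicInt.exists_one_add_two_mul_pow_four_eq (k * ↑u⁻¹)
  obtain ⟨s, hs⟩ := PadicInt.isUnit_one_add_two_mul z
  refine ⟨x₀ * ↑s⁻¹, y₀ * ↑s⁻¹, ?_⟩
  rw [← hu] at hk ⊢
  calc _ = ((a0:ℤ_[2])*x₀^4 + (a1:ℤ_[2])*x₀^3*y₀ + (a2:ℤ_[2])*x₀^2*y₀^2
        + (a3:ℤ_[2])*x₀*y₀^3 + (a4:ℤ_[2])*y₀^4) * (↑s⁻¹) ^ 4 := by ring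
    _ = u * (1 + 16 * (k * ↑u⁻¹)) * (↑s⁻¹) ^ 4 := by
      linear_combination (↑s⁻¹ : ℤ_[2]) ^ 4 * hk - 16 * k * (↑s⁻¹ : ℤ_[2]) ^ 4 * u.mul_inv
    _ = u := by rw [← hz, ← hs, mul_assoc, ← mul_pow, s.mul_inv, one_pow, mul_one]
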